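/- arXiv:1809.07230 — 5 statements merged into one kernel-verified Lean document; each statement's English description precedes it below -/
import Mathlib

section
/- det(I + g·L_N) = ∏_{k=1}^{N} (1 + 2(1 − cos((2k−1)π/(2N+1)))·g) for every complex number g. -/
/-!
Expanding along the last row, `D n = det (1 + g • L_n)` satisfies
`D (n + 2) = (1 + 2g) D (n + 1) - g² D n`, with `D 0 = 1` and `D 1 = 1 + g`.
If `g (z - 1)² = z`, this recurrence is solved by `(z + 1) zⁿ D n = gⁿ (z^(2n+1) + 1)`.
The roots of `z^(2N+1) + 1` are `-1` and the conjugate pairs `exp (± iθₖ)`, `θₖ = (2k-1)π/(2N+1)`,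
and `g (z² - 2z cos θ + 1) = z (1 + 2 (1 - cos θ) g)`, which gives the product formula.
A suitable `z ∉ {0, -1}` exists unless `g ∈ {0, -1/4}`, and both sides are continuous in `g`.
-/

open Matrix

/-- The `N×N` tridiagonal matrix with diagonal `(1,2,2,...,2)` and off-diagonal entries `-1`. -/
def Lmat (R : Type*) [Ring R] (N : ℕ) : Matrix (Fin N) (Fin N) R :=
  Matrix.of fun i j =>
    if i = j then (if (i : ℕ) = 0 then 1 else 2)
    else if (i : ℕ) + 1 = (j : ℕ) ∨ (j : ℕ) + 1 = (i : ℕ) then -1 else 0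

/-- The `N×N` tridiagonal matrix with diagonal `2` and off-diagonal entries `-1`. -/
def Lbar (R : Type*) [Ring R] (N : ℕ) : Matrix (Fin N) (Fin N) R :=
  Matrix.of fun i j =>
    if i = j then 2
    else if (i : ℕ) + 1 = (j : ℕ) ∨ (j : ℕ) + 1 = (i : ℕ) then -1 else 0

/-- `μ` is an eigenvalue of the matrix `A`. -/
def IsEig {R : Type*} [CommRing R] {N : ℕ} (A : Matrix (Fin N) (Fin N) R) (μ : R) : Prop :=
  ∃ v : Fin N → R, v ≠ 0 ∧ A.mulVec v = μ • v

open Finset Complex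
open scoped Real

theorem Matrix.det_succ_succ_of_last_row_col {R : Type*} [CommRing R] {n : ℕ}
    (M : Matrix (Fin (n + 2)) (Fin (n + 2)) R)
    (hrow : ∀ j : Fin n, M (Fin.last _) j.castSucc.castSucc = 0)
    (hcol : ∀ i : Fin n, M i.castSucc.castSucc (Fin.last _) = 0) :
    M.det = M (Fin.last _) (Fin.last _) * (M.submatrix Fin.castSucc Fin.castSucc).det
      - M (Fin.last _) (Fin.last n).castSucc * M (Fin.last n).castSucc (Fin.last _)
        * (M.submatrix (Fin.castSucc ∘ Fin.castSucc) (Fin.castSucc ∘ Fin.castSucc)).det := by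
  have hminor : (M.submatrix Fin.castSucc (Fin.last n).castSucc.succAbove).det
      = M (Fin.last n).castSucc (Fin.last _)
        * (M.submatrix (Fin.castSucc ∘ Fin.castSucc) (Fin.castSucc ∘ Fin.castSucc)).det := by
    rw [det_succ_column _ (Fin.last n), Fin.sum_univ_castSucc]
    simp [hcol, Fin.castSucc_succAbove_castSucc, Fin.succAbove_last, submatrix_submatrix,
      Function.comp_def, ← two_mul, pow_mul]
  rw [det_succ_row _ (Fin.last _), Fin.sum_univ_castSucc, Fin.sum_univ_castSucc]
  simp [hrow, hminor, Fin.succAbove_last, ← two_mul, pow_mul, sub_eq_add_neg, mul_assoc, add_comm]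

theorem Finset.prod_range_two_mul_add_one {M : Type*} [CommMonoid M] (f : ℕ → M) (N : ℕ) :
    ∏ j ∈ range (2 * N + 1), f j = (∏ k ∈ range N, f k * f (2 * N - k)) * f N := by
  rw [two_mul, add_assoc, prod_range_add, prod_range_succ', prod_mul_distrib, mul_assoc,
    ← prod_range_reflect (fun k => f (N + (k + 1))) N]
  congr 2
  refine prod_congr rfl fun k hk => ?_
  rw [mem_range] at hk
  congr 1
  omega

theorem pow_add_one_eq_prod_sub_exp (z : ℂ) {n : ℕ} (hn : 0 < n) :
    z ^ n + 1 = ∏ j ∈ range n, (z - exp ((2 * j + 1) * π * I / n)) := by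
  have hn' : (n : ℂ) ≠ 0 := Nat.cast_ne_zero.mpr hn.ne'
  have hc : exp (π * I / n) ^ n = -1 := by
    rw [← exp_nat_mul, mul_div_cancel₀ _ hn', exp_pi_mul_I]
  have h := congrArg (Polynomial.eval z)
    (X_pow_sub_C_eq_prod (isPrimitiveRoot_exp n hn.ne') hn hc)
  simp only [Polynomial.eval_sub, Polynomial.eval_pow, Polynomial.eval_X, Polynomial.eval_C,
    Polynomial.eval_prod, sub_neg_eq_add] at h
  rw [h]
  refine prod_congr rfl fun j _ => ?_
  rw [← exp_nat_mul, ← exp_add]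
  congr 2
  field_simp

theorem sub_exp_mul_sub_exp_neg (z θ : ℂ) :
    (z - exp (θ * I)) * (z - exp (-θ * I)) = z ^ 2 - 2 * z * cos θ + 1 := by
  have hprod : exp (θ * I) * exp (-θ * I) = 1 := by
    rw [← exp_add, neg_mul, add_neg_cancel, exp_zero]
  linear_combination hprod + z * two_cos θ

theorem pow_two_mul_add_one_add_one_eq_mul_prod (z : ℂ) (N : ℕ) :
    z ^ (2 * N + 1) + 1 = (z + 1) * ∏ k ∈ Icc 1 N,
      (z ^ 2 - 2 * z * (Real.cos ((2 * (k : ℝ) - 1) * π / (2 * N + 1)) : ℂ) + 1) := by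
  have hN : (2 * N + 1 : ℂ) ≠ 0 := by exact_mod_cast (2 * N).succ_ne_zero
  rw [pow_add_one_eq_prod_sub_exp z (by positivity : 0 < 2 * N + 1), prod_range_two_mul_add_one,
    mul_comm, ← Ico_add_one_right_eq_Icc, prod_Ico_eq_prod_range, Nat.add_sub_cancel]
  congr 1
  · push_cast
    rw [mul_assoc, mul_div_cancel_left₀ _ hN, exp_pi_mul_I, sub_neg_eq_add]
  · refine prod_congr rfl fun k hk => ?_
    rw [mem_range] at hk
    have hangle : (((2 * ((1 + k : ℕ) : ℝ) - 1) * π / (2 * N + 1) : ℝ) : ℂ)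
        = (2 * k + 1) * π / (2 * N + 1) := by
      push_cast
      ring
    have hroot : (2 * k + 1) * π * I / ((2 * N + 1 : ℕ) : ℂ)
        = (2 * k + 1) * π / (2 * N + 1) * I := by
      push_cast
      ring
    have hroot' : (2 * ((2 * N - k : ℕ) : ℂ) + 1) * π * I / ((2 * N + 1 : ℕ) : ℂ)
        = -((2 * k + 1) * π / (2 * N + 1)) * I + 2 * π * I := by
      push_cast [Nat.cast_sub (by omega : k ≤ 2 * N)]
      field_simp
      ring
    rw [ofReal_cos, hangle, hroot, hroot', exp_add, exp_two_pi_mul_I, mul_one,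
      sub_exp_mul_sub_exp_neg]

section

variable {R : Type*} [CommRing R]

theorem one_add_smul_Lmat_submatrix_castSucc (g : R) (n : ℕ) :
    (1 + g • Lmat R (n + 1)).submatrix Fin.castSucc Fin.castSucc = 1 + g • Lmat R n := by
  ext i j
  simp only [submatrix_apply, Matrix.add_apply, Matrix.smul_apply, one_apply, Lmat, of_apply,
    Fin.val_castSucc, Fin.ext_iff]

theorem one_add_smul_Lmat_apply (g : R) {n : ℕ} (i j : Fin n) :
    (1 + g • Lmat R n) i j =
      if i = j then (if (i : ℕ) = 0 then 1 + g else 1 + 2 * g)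
      else if (i : ℕ) + 1 = j ∨ (j : ℕ) + 1 = i then -g else 0 := by
  simp only [Matrix.add_apply, Matrix.smul_apply, one_apply, Lmat, of_apply]
  split_ifs <;> simp [mul_comm]

theorem det_one_add_smul_Lmat_one (g : R) : (1 + g • Lmat R 1).det = 1 + g := by
  rw [det_unique, one_add_smul_Lmat_apply]
  simp

theorem det_one_add_smul_Lmat_succ_succ (g : R) (n : ℕ) :
    (1 + g • Lmat R (n + 2)).det
      = (1 + 2 * g) * (1 + g • Lmat R (n + 1)).det - g ^ 2 * (1 + g • Lmat R n).det := by
  rw [det_succ_succ_of_last_row_col, one_add_smul_Lmat_submatrix_castSucc,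
    ← submatrix_submatrix, one_add_smul_Lmat_submatrix_castSucc,
    one_add_smul_Lmat_submatrix_castSucc]
  all_goals simp only [one_add_smul_Lmat_apply, Fin.ext_iff, Fin.val_last, Fin.val_castSucc]
  · simp [sub_eq_add_neg, sq]
  · intro j
    rw [if_neg (by omega), if_neg (by omega)]
  · intro i
    rw [if_neg (by omega), if_neg (by omega)]

theorem add_one_mul_pow_mul_det_one_add_smul_Lmat {g z : R} (hz : g * (z - 1) ^ 2 = z) (n : ℕ) :
    (z + 1) * z ^ n * (1 + g • Lmat R n).det = g ^ n * (z ^ (2 * n + 1) + 1) := by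
  induction n using Nat.twoStepInduction with
  | zero => simp
  | one =>
    rw [det_one_add_smul_Lmat_one]
    linear_combination (-(z + 1)) * hz
  | more n ih₀ ih₁ =>
    rw [det_one_add_smul_Lmat_succ_succ]
    linear_combination (1 + 2 * g) * z * ih₁ - g ^ 2 * z ^ 2 * ih₀
      - g ^ (n + 1) * (z ^ (2 * n + 3) + 1) * hz

end

theorem exists_mul_sub_one_sq_eq_self {g : ℂ} (hg : g ≠ 0) : ∃ z : ℂ, g * (z - 1) ^ 2 = z := by
  obtain ⟨s, hs⟩ := IsAlgClosed.exists_eq_mul_self (discrim g (-(2 * g + 1)) g)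
  obtain ⟨z, hz⟩ := exists_quadratic_eq_zero hg ⟨s, hs⟩
  exact ⟨z, by linear_combination hz⟩

theorem det_one_add_smul_Lmat_of_ne_zero (N : ℕ) {g : ℂ} (hg : g ≠ 0) (hg' : 1 + 4 * g ≠ 0) :
    (1 + g • Lmat ℂ N).det = ∏ k ∈ Icc 1 N,
      (1 + 2 * (1 - (Real.cos ((2 * (k : ℝ) - 1) * π / (2 * N + 1)) : ℂ)) * g) := by
  obtain ⟨z, hz⟩ := exists_mul_sub_one_sq_eq_self hg
  have hz₀ : z ≠ 0 := by
    rintro rfl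
    exact hg (by simpa using hz)
  have hz₁ : z + 1 ≠ 0 := by
    intro h
    exact hg' (by linear_combination hz + (g * (3 - z) + 1) * h)
  have hfactor : ∀ k ∈ Icc 1 N,
      z * (1 + 2 * (1 - (Real.cos ((2 * (k : ℝ) - 1) * π / (2 * N + 1)) : ℂ)) * g)
        = g * (z ^ 2 - 2 * z * (Real.cos ((2 * (k : ℝ) - 1) * π / (2 * N + 1)) : ℂ) + 1) :=
    fun k _ => by linear_combination -hz
  have hpow := prod_congr rfl hfactor
  rw [prod_mul_distrib, prod_mul_distrib, prod_const, prod_const, Nat.card_Icc,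
    Nat.add_sub_cancel] at hpow
  apply mul_left_cancel₀ (mul_ne_zero hz₁ (pow_ne_zero N hz₀))
  rw [add_one_mul_pow_mul_det_one_add_smul_Lmat hz, pow_two_mul_add_one_add_one_eq_mul_prod,
    mul_assoc, hpow]
  ring

/-- `det(I + g·L_N) = ∏_{k=1}^N (1 + 2(1 - cos((2k-1)π/(2N+1)))·g)`. -/
theorem det_one_add_smul_Lmat (N : ℕ) (g : ℂ) :
    Matrix.det (1 + g • Lmat ℂ N)
      = ∏ k ∈ Finset.Icc 1 N,
          (1 + 2 * (1 - (Real.cos ((2 * (k : ℝ) - 1) * Real.pi / (2 * N + 1)) : ℂ)) * g) := by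
  have hdense : Dense ({0, -1 / 4} : Set ℂ)ᶜ := (Set.toFinite _).countable.dense_compl ℂ
  have hdet : Continuous fun g : ℂ => (1 + g • Lmat ℂ N).det :=
    Continuous.matrix_det (by fun_prop)
  revert g
  refine funext_iff.mp (Continuous.ext_on hdense hdet ?_ fun g hg => ?_)
  · fun_prop
  · simp only [Set.mem_compl_iff, Set.mem_insert_iff, Set.mem_singleton_iff, not_or] at hg
    exact det_one_add_smul_Lmat_of_ne_zero N hg.1 fun h => hg.2 (by linear_combination h / 4)
end

section
/- Let g be a nonzero complex number and let ζ satisfy ζ² − (1/g + 2)ζ + 1 = 0 with |ζ| < 1. Then the (1,1) entry of (I + g·L_N)^{-1} equals (1 − ζ)·(1 − ζ^{2N})/(1 + ζ^{2N+1}). -/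
open Matrix

/-!
If `g (ζ - 1)² = ζ`, both `ζ ^ n` and `ζ ^ (-n)` solve the recurrence given by the rows
`i ≥ 1` of `(1 + g • L_N) w = 0`. Their combination `u n = ζ ^ n - ζ ^ (2N - n)` vanishes at
`n = N`, so it also satisfies the last row, and the first row gives
`(1 + g • L_N) u = (1 + ζ ^ (2N + 1)) / (1 - ζ) • e₀`. Hence the first column of the inverse is
`u` divided by that factor.
-/

lemma Lmat_mulVec_apply {R : Type*} [Ring R] {N : ℕ} (u : ℕ → R) (hu : u N = 0) (i : Fin N) :
    (Lmat R N *ᵥ fun j : Fin N => u j) i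
      = if (i : ℕ) = 0 then u 0 - u 1 else 2 * u i - u (i + 1) - u (i - 1) := by
  have hrow : ∀ j : Fin N, Lmat R N i j * u j =
      ((if (i : ℕ) = j then (if (i : ℕ) = 0 then 1 else 2) * u j else 0)
        - (if (i : ℕ) + 1 = j then u j else 0)) - (if (j : ℕ) + 1 = i then u j else 0) := by
    intro j
    simp only [Lmat, of_apply, Fin.ext_iff]
    split_ifs <;> first | omega | simp
  simp only [mulVec, dotProduct, hrow, Finset.sum_sub_distrib,
    Fin.sum_univ_eq_sum_range
      (fun n => if (i : ℕ) = n then (if (i : ℕ) = 0 then 1 else 2) * u n else 0),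
    Fin.sum_univ_eq_sum_range (fun n => if (i : ℕ) + 1 = n then u n else 0),
    Fin.sum_univ_eq_sum_range (fun n => if n + 1 = (i : ℕ) then u n else 0),
    Finset.sum_ite_eq, Finset.mem_range, i.isLt, if_true]
  have hnext : (if (i : ℕ) + 1 < N then u (i + 1) else 0) = u (i + 1) := by
    split_ifs with h
    · rfl
    · rw [show (i : ℕ) + 1 = N by omega, hu]
  rw [hnext]
  rcases i with ⟨_ | k, hk⟩
  · simp
  · simp [Finset.sum_ite_eq', show k < N by omega]

lemma one_add_pow_ne_zero_of_norm_lt_one {𝕜 : Type*} [NormedDivisionRing 𝕜] {x : 𝕜} (hx : ‖x‖ < 1)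
    {n : ℕ} (hn : n ≠ 0) : 1 + x ^ n ≠ 0 := by
  intro h
  have hnorm : ‖x‖ ^ n = 1 := by rw [← norm_pow, eq_neg_of_add_eq_zero_right h, norm_neg, norm_one]
  exact (pow_lt_one₀ (norm_nonneg x) hx hn).ne hnorm

lemma Matrix.mul_inv_apply_of_mulVec_eq_smul_single {n R : Type*} [Fintype n] [DecidableEq n]
    [CommRing R] {M : Matrix n n R} (hM : IsUnit M.det) {v : n → R} {c : R} {i : n}
    (h : M *ᵥ v = c • Pi.single i 1) (j : n) : c * M⁻¹ j i = v j := by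
  have hv : M⁻¹ *ᵥ (M *ᵥ v) = v := by rw [mulVec_mulVec, nonsing_inv_mul _ hM, one_mulVec]
  rw [h, mulVec_smul, mulVec_single] at hv
  simpa using congrFun hv j

lemma pow_add_mul_second_difference_eq_zero {R : Type*} [CommRing R] {g x : R}
    (h : g * (x - 1) ^ 2 = x) (k : ℕ) :
    x ^ (k + 1) + g * (2 * x ^ (k + 1) - x ^ (k + 2) - x ^ k) = 0 := by
  linear_combination (-x ^ k) * h

lemma one_sub_ne_zero_of_mul_sub_one_sq_eq_self {R : Type*} [CommRing R] [Nontrivial R] {g x : R}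
    (h : g * (x - 1) ^ 2 = x) : 1 - x ≠ 0 := by
  rintro hx
  rw [← sub_eq_zero.mp hx] at h
  simp at h

section

variable {K : Type*} [Field K]

lemma mul_inv_sub_one_sq_eq_inv {g x : K} (h : g * (x - 1) ^ 2 = x) :
    g * (x⁻¹ - 1) ^ 2 = x⁻¹ := by
  rcases eq_or_ne x 0 with rfl | hx
  · simpa using h
  · field_simp
    linear_combination h

/-- `ζ ^ n - ζ ^ (2 * N - n)`, written with `ζ⁻¹` to avoid truncated subtraction: the combination
of `ζ ^ n` and `ζ ^ (-n)` that vanishes at `n = N`. -/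
def reflectedPowSeq (ζ : K) (N n : ℕ) : K := ζ ^ n - ζ ^ (2 * N) * ζ⁻¹ ^ n

lemma reflectedPowSeq_self {ζ : K} (hζ : ζ ≠ 0) (N : ℕ) : reflectedPowSeq ζ N N = 0 := by
  rw [reflectedPowSeq, two_mul, pow_add, mul_assoc, ← mul_pow, mul_inv_cancel₀ hζ, one_pow,
    mul_one, sub_self]

lemma one_add_smul_Lmat_mulVec_reflectedPowSeq {N : ℕ} (hN : 0 < N) {g ζ : K} (hζ : ζ ≠ 0)
    (h : g * (ζ - 1) ^ 2 = ζ) :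
    (1 + g • Lmat K N) *ᵥ (fun j : Fin N => reflectedPowSeq ζ N j)
      = ((1 + ζ ^ (2 * N + 1)) / (1 - ζ)) • Pi.single ⟨0, hN⟩ 1 := by
  funext i
  rw [add_mulVec, one_mulVec, smul_mulVec]
  simp only [Pi.add_apply, Pi.smul_apply, smul_eq_mul,
    Lmat_mulVec_apply _ (reflectedPowSeq_self hζ N)]
  rcases i with ⟨_ | k, hk⟩
  · have hζ1 := one_sub_ne_zero_of_mul_sub_one_sq_eq_self h
    simp only [reflectedPowSeq, if_true, Pi.single_eq_same]
    field_simp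
    linear_combination (ζ + ζ ^ (2 * N)) * h
  · have hne : (⟨k + 1, hk⟩ : Fin N) ≠ ⟨0, hN⟩ := by simp [Fin.ext_iff]
    simp only [Nat.add_one_ne_zero, if_false, Pi.single_eq_of_ne hne, mul_zero, reflectedPowSeq,
      Nat.add_sub_cancel]
    linear_combination pow_add_mul_second_difference_eq_zero h k
      - ζ ^ (2 * N) * pow_add_mul_second_difference_eq_zero (mul_inv_sub_one_sq_eq_inv h) k

end

/-- If `ζ` is the root of `ζ² − (1/g + 2)ζ + 1 = 0` with `|ζ| < 1`, then the `(1,1)`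
entry of `(I + g·L_N)⁻¹` equals `(1 − ζ)(1 − ζ^{2N})/(1 + ζ^{2N+1})`. -/
theorem inv_entry_eq_zeta_formula (N : ℕ) (hN : 0 < N) (g : ℂ) (hg : g ≠ 0) (ζ : ℂ)
    (hroot : ζ ^ 2 - (1 / g + 2) * ζ + 1 = 0) (hζ : ‖ζ‖ < 1)
    (hinv : IsUnit (1 + g • Lmat ℂ N)) :
    (1 + g • Lmat ℂ N)⁻¹ ⟨0, hN⟩ ⟨0, hN⟩
      = (1 - ζ) * (1 - ζ ^ (2 * N)) / (1 + ζ ^ (2 * N + 1)) := by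
  have hζ0 : ζ ≠ 0 := by
    rintro rfl
    norm_num at hroot
  have hquad : g * (ζ - 1) ^ 2 = ζ := by
    field_simp at hroot
    linear_combination hroot
  have hζ1 := one_sub_ne_zero_of_mul_sub_one_sq_eq_self hquad
  have hden : 1 + ζ ^ (2 * N + 1) ≠ 0 :=
    one_add_pow_ne_zero_of_norm_lt_one hζ (Nat.succ_ne_zero _)
  have hcol := Matrix.mul_inv_apply_of_mulVec_eq_smul_single ((isUnit_iff_isUnit_det _).mp hinv)
    (one_add_smul_Lmat_mulVec_reflectedPowSeq hN hζ0 hquad) ⟨0, hN⟩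
  simp only [reflectedPowSeq, pow_zero, mul_one] at hcol
  rw [eq_div_iff hden]
  field_simp at hcol
  linear_combination hcol
end

section
/- If z is a complex number in the open right half-plane that is a pole of S_N(s) = [(I + P(s)C(s)L_N)^{-1}]_{1,1} for some N, then P(z)C(z)·λ = −1 for some eigenvalue λ of L_N; conversely, if det(I + P(s)C(s)L_N) vanishes at z ∈ ℂ₊, then −1/(P(z)C(z)) is an eigenvalue of L_N. -/
open Matrix

set_option synthInstance.maxHeartbeats 1000000
set_option maxHeartbeats 1000000

open Filter

/-!
Write `P * C = p / q` in lowest terms. Then `1 + (P * C) • L_N = q⁻¹ • (q • 1 + p • L_N)`, so by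
Cramer's rule every entry of its inverse has a denominator dividing `det (q • 1 + p • L_N)`, and
a pole of `S_N` at `z` makes `det (q(z) • 1 + p(z) • L_N)` vanish. As `p` and `q` have no common
zero and `L_N = (1 - J)ᵀ (1 - J)` for the shift `J` has determinant `1`, neither `q(z)` nor `p(z)`
is zero, and a kernel vector is an eigenvector of `L_N` for `-q(z) / p(z) = -1 / (P C)(z)`.
The second implication is the same kernel argument with `q(z)` replaced by `1`.
-/

open Polynomial

def shiftMat (R : Type*) [Ring R] (N : ℕ) : Matrix (Fin N) (Fin N) R :=
  Matrix.of fun i j => if (i : ℕ) + 1 = (j : ℕ) then 1 else 0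

lemma transpose_shiftMat_mul_shiftMat (R : Type*) [Ring R] (N : ℕ) :
    (shiftMat R N)ᵀ * shiftMat R N =
      Matrix.of fun (i j : Fin N) => if i = j ∧ (i : ℕ) ≠ 0 then 1 else 0 := by
  ext i j
  simp only [mul_apply, transpose_apply, shiftMat, of_apply, mul_ite, mul_one, mul_zero]
  rcases Nat.eq_zero_or_pos (i : ℕ) with hi | hi
  · refine (Finset.sum_eq_zero fun k _ => ?_).trans (by simp [hi])
    simp [show (k : ℕ) + 1 ≠ i by omega]
  · rw [Fintype.sum_eq_single ⟨i - 1, by omega⟩ fun k hk => ?_]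
    · simp [Fin.ext_iff, hi.ne', show (i : ℕ) - 1 + 1 = i by omega]
    · have : (k : ℕ) + 1 ≠ i := fun h => hk (Fin.ext (by simp; omega))
      simp [this]

lemma Lmat_eq_transpose_mul (R : Type*) [Ring R] (N : ℕ) :
    Lmat R N = (1 - shiftMat R N)ᵀ * (1 - shiftMat R N) := by
  have expand : (1 - shiftMat R N)ᵀ * (1 - shiftMat R N)
      = 1 - shiftMat R N - (shiftMat R N)ᵀ + (shiftMat R N)ᵀ * shiftMat R N := by
    rw [transpose_sub, transpose_one]
    noncomm_ring
  rw [expand, transpose_shiftMat_mul_shiftMat]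
  ext i j
  simp only [Lmat, shiftMat, Matrix.add_apply, Matrix.sub_apply, one_apply, transpose_apply,
    of_apply, Fin.ext_iff]
  split_ifs <;> first | omega | norm_num

lemma det_Lmat (R : Type*) [CommRing R] (N : ℕ) : (Lmat R N).det = 1 := by
  have hupper : (1 - shiftMat R N).IsUpperTriangular := fun i j (hji : j < i) => by
    have : (i : ℕ) + 1 ≠ j := by have : (j : ℕ) < i := hji; omega
    simp [shiftMat, one_apply, hji.ne', this]
  rw [Lmat_eq_transpose_mul, det_mul, det_transpose, det_of_isUpperTriangular hupper]
  simp [shiftMat]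

lemma map_Lmat {R S : Type*} [Ring R] [Ring S] (f : R →+* S) (N : ℕ) :
    (Lmat R N).map f = Lmat S N := by
  ext i j
  simp only [Lmat, map_apply, of_apply]
  split_ifs <;> simp [map_ofNat]

section Field

variable {K : Type*} [Field K]

lemma isEig_neg_div_of_det_smul_add_smul_eq_zero {N : ℕ} {A : Matrix (Fin N) (Fin N) K}
    {a b : K} (hb : b ≠ 0) (h : (a • 1 + b • A).det = 0) : IsEig A (-a / b) := by
  obtain ⟨v, hv, hv0⟩ := exists_mulVec_eq_zero_iff.mpr h
  refine ⟨v, hv, ?_⟩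
  rw [add_mulVec, smul_mulVec, smul_mulVec, one_mulVec] at hv0
  calc A *ᵥ v = b⁻¹ • (b • A *ᵥ v) := by rw [smul_smul, inv_mul_cancel₀ hb, one_smul]
    _ = b⁻¹ • -(a • v) := by rw [eq_neg_of_add_eq_zero_right hv0]
    _ = (-a / b) • v := by rw [smul_neg, smul_smul, ← neg_smul, neg_div, div_eq_inv_mul]

lemma ne_zero_and_ne_zero_of_det_smul_add_smul_eq_zero {n : Type*} [Fintype n] [DecidableEq n]
    {A : Matrix n n K} (hA : A.det ≠ 0) {a b : K} (hab : a ≠ 0 ∨ b ≠ 0)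
    (h : (a • 1 + b • A).det = 0) : a ≠ 0 ∧ b ≠ 0 := by
  rcases hab with ha | hb
  · refine ⟨ha, fun hb => ?_⟩
    simp [hb, ha] at h
  · refine ⟨fun ha => ?_, hb⟩
    simp [ha, hb, hA] at h

lemma Matrix.inv_smul_of_ne_zero {n : Type*} [Fintype n] [DecidableEq n] {c : K} (hc : c ≠ 0)
    (X : Matrix n n K) : (c • X)⁻¹ = c⁻¹ • X⁻¹ := by
  by_cases hX : IsUnit X.det
  · exact inv_smul' X (Units.mk0 c hc) hX
  · have hcX : ¬IsUnit (c • X).det := by simpa [det_smul, hc] using hX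
    rw [nonsing_inv_apply_not_isUnit _ hX, nonsing_inv_apply_not_isUnit _ hcX, smul_zero]

end Field

section RatFunc

variable {K : Type*} [Field K] {n : Type*} [Fintype n] [DecidableEq n]

lemma RatFunc.inv_map_algebraMap_apply (M : Matrix n n K[X]) (i j : n) :
    (M.map (algebraMap K[X] (RatFunc K)))⁻¹ i j =
      algebraMap K[X] (RatFunc K) (M.adjugate i j) / algebraMap K[X] (RatFunc K) M.det := by
  rw [Matrix.inv_def, Matrix.smul_apply, ← RingHom.mapMatrix_apply, ← RingHom.map_det,
    ← RingHom.map_adjugate]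
  simp [div_eq_inv_mul]

lemma RatFunc.denom_inv_one_add_smul_apply_dvd (g : RatFunc K) (A : Matrix n n K[X]) (i j : n) :
    ((1 + g • A.map (algebraMap K[X] (RatFunc K)))⁻¹ i j).denom ∣
      (g.denom • 1 + g.num • A).det := by
  set φ := algebraMap K[X] (RatFunc K)
  set M := g.denom • 1 + g.num • A
  have hq : φ g.denom ≠ 0 := RatFunc.algebraMap_ne_zero g.denom_ne_zero
  have hM : 1 + g • A.map φ = (φ g.denom)⁻¹ • M.map φ := by
    have hmap : M.map φ = φ g.denom • 1 + φ g.num • A.map φ := by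
      ext i j
      simp [M, one_apply, apply_ite]
    rw [hmap, smul_add, smul_smul, smul_smul, inv_mul_cancel₀ hq, one_smul, inv_mul_eq_div,
      RatFunc.num_div_denom]
  have hentry : (1 + g • A.map φ)⁻¹ i j = φ (g.denom * M.adjugate i j) / φ M.det := by
    rw [hM, inv_smul_of_ne_zero (inv_ne_zero hq), inv_inv, Matrix.smul_apply,
      inv_map_algebraMap_apply, map_mul, smul_eq_mul, mul_div_assoc]
  by_cases hE : M.det = 0
  · simp [hentry, hE]
  · exact (RatFunc.denom_dvd hE).mpr ⟨_, hentry⟩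

end RatFunc

lemma Polynomial.eval_det_smul_one_add_smul {R : Type*} [CommRing R] {n : Type*} [Fintype n]
    [DecidableEq n] (a b : R[X]) (A : Matrix n n R[X]) (z : R) :
    (a • 1 + b • A).det.eval z = (a.eval z • 1 + b.eval z • A.map (eval z)).det := by
  rw [← coe_evalRingHom, RingHom.map_det]
  congr 1
  ext i j
  simp [one_apply, apply_ite]

theorem pole_iff_eigenvalue_general (P C : RatFunc ℂ) (N : ℕ) (hN : 0 < N) (z : ℂ) :
    ((((1 + (P * C) • Lmat (RatFunc ℂ) N)⁻¹ ⟨0, hN⟩ ⟨0, hN⟩).denom.eval z = 0) →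
        ∃ μ : ℂ, IsEig (Lmat ℂ N) μ ∧ (P * C).eval (RingHom.id ℂ) z * μ = -1) ∧
    ((Matrix.det (1 + ((P * C).eval (RingHom.id ℂ) z) • Lmat ℂ N) = 0) →
        IsEig (Lmat ℂ N) (-1 / ((P * C).eval (RingHom.id ℂ) z))) := by
  set g := P * C
  have hL : (Lmat ℂ N).det ≠ 0 := by simp [det_Lmat]
  refine ⟨fun hpole => ?_, fun hdet => ?_⟩
  · have hdet : (g.denom.eval z • 1 + g.num.eval z • Lmat ℂ N).det = 0 := by
      have hdvd := RatFunc.denom_inv_one_add_smul_apply_dvd g (Lmat ℂ[X] N) ⟨0, hN⟩ ⟨0, hN⟩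
      rw [map_Lmat] at hdvd
      obtain ⟨r, hr⟩ := hdvd
      rw [← map_Lmat (evalRingHom z), coe_evalRingHom, ← eval_det_smul_one_add_smul, hr,
        eval_mul, hpole, zero_mul]
    have hcop : g.denom.eval z ≠ 0 ∨ g.num.eval z ≠ 0 := by
      simpa using aeval_ne_zero_of_isCoprime g.isCoprime_num_denom.symm z
    obtain ⟨hq, hp⟩ := ne_zero_and_ne_zero_of_det_smul_add_smul_eq_zero hL hcop hdet
    refine ⟨_, isEig_neg_div_of_det_smul_add_smul_eq_zero hp hdet, ?_⟩
    rw [RatFunc.eval, eval₂_id, eval₂_id]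
    field_simp
  · rw [← one_smul ℂ (1 : Matrix (Fin N) (Fin N) ℂ)] at hdet
    obtain ⟨-, hc⟩ := ne_zero_and_ne_zero_of_det_smul_add_smul_eq_zero hL (.inl one_ne_zero) hdet
    exact isEig_neg_div_of_det_smul_add_smul_eq_zero hc hdet

/-- Poles of `S_N` in the open right half-plane force `P(z)C(z)λ = -1` for an eigenvalue `λ`
of `L_N`; conversely, vanishing of `det(I + P(z)C(z)L_N)` at `z ∈ ℂ₊` makes `-1/(P(z)C(z))`
an eigenvalue of `L_N`. -/
theorem pole_iff_eigenvalue (P C : RatFunc ℂ) (N : ℕ) (hN : 0 < N) (z : ℂ) (hz : 0 < z.re) :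
    ((((1 + (P * C) • Lmat (RatFunc ℂ) N)⁻¹ ⟨0, hN⟩ ⟨0, hN⟩).denom.eval z = 0) →
        ∃ μ : ℂ, IsEig (Lmat ℂ N) μ ∧ (P * C).eval (RingHom.id ℂ) z * μ = -1) ∧
    ((Matrix.det (1 + ((P * C).eval (RingHom.id ℂ) z) • Lmat ℂ N) = 0) →
        IsEig (Lmat ℂ N) (-1 / ((P * C).eval (RingHom.id ℂ) z))) :=
  pole_iff_eigenvalue_general P C N hN z
end

section
/- If 1/(1 + k·P(s)C(s)) is stable (has no poles in the closed right half-plane) for every k ∈ (0,4), then for every N ∈ ℕ the rational function 1/det(I + P(s)C(s)L_N) has no poles in the closed right half-plane. -/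
open Matrix

set_option synthInstance.maxHeartbeats 1000000
set_option maxHeartbeats 1000000

/-- A real rational function is stable (lies in `H∞`) if it is proper and its (reduced)
denominator has no roots in the closed right half-plane. -/
def IsStable (F : RatFunc ℝ) : Prop :=
  F.num.degree ≤ F.denom.degree ∧
    ∀ z : ℂ, 0 ≤ z.re → (F.denom.map (algebraMap ℝ ℂ)).eval z ≠ 0

/-!
Write `P C = p / q` in lowest terms. Then `q ^ N * det (1 + P C L_N) = det (q • 1 + p • L_N)`,
so a pole `z` of the inverse determinant in the closed right half-plane is a root of
`det (q(z) • 1 + p(z) • L_N)`. Since `L_N = Bᴴ B` and `4 - L_N = B'ᴴ B' + diag (2, 0, …, 0)`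
with `B = 1 - S`, `B' = 1 + S` unitriangular (`S` the shift), `L_N` and `4 - L_N` are positive
definite, so `q(z) + k p(z) = 0` for an eigenvalue `k ∈ (0, 4)` of `L_N`. Then `z` is a pole
of `1 / (1 + k P C) = q / (q + k p)`, contradicting stability.
-/

open Polynomial
open scoped ComplexOrder

section Shift

variable (R : Type*) [CommRing R] (N : ℕ)

def shiftMatrix : Matrix (Fin N) (Fin N) R :=
  Matrix.of fun i j => if (i : ℕ) + 1 = j then 1 else 0

variable {R N}

theorem shiftMatrix_conjTranspose [StarRing R] : (shiftMatrix R N)ᴴ = (shiftMatrix R N)ᵀ := by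
  ext i j
  simp [shiftMatrix, apply_ite star]

theorem transpose_shiftMatrix_mul_shiftMatrix :
    (shiftMatrix R N)ᵀ * shiftMatrix R N =
      diagonal fun i : Fin N => if (i : ℕ) = 0 then 0 else 1 := by
  ext ⟨i, hi⟩ ⟨j, hj⟩
  rw [mul_apply, diagonal_apply]
  simp only [transpose_apply, shiftMatrix, of_apply, Fin.mk.injEq]
  rcases i with _ | i
  · simp
  · rw [Fintype.sum_eq_single ⟨i, by omega⟩ fun k hk => by
      rw [if_neg fun h => hk (Fin.ext (by simp only at h ⊢; omega)), zero_mul]]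
    split_ifs <;> simp_all

theorem det_one_add_smul_shiftMatrix (c : R) : (1 + c • shiftMatrix R N).det = 1 := by
  rw [det_of_isUpperTriangular fun i j hji => ?_]
  · exact Finset.prod_eq_one fun i _ => by simp [shiftMatrix]
  · simp only [id_eq, Fin.lt_def] at hji
    simp only [Matrix.add_apply, one_apply, Matrix.smul_apply, shiftMatrix, of_apply, Fin.ext_iff]
    rw [if_neg (by omega), if_neg (by omega), smul_zero, add_zero]

theorem Lmat_eq_conjTranspose_mul_self [StarRing R] :
    Lmat R N = (1 - shiftMatrix R N)ᴴ * (1 - shiftMatrix R N) := by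
  rw [conjTranspose_sub, conjTranspose_one, shiftMatrix_conjTranspose, sub_mul, one_mul, mul_sub,
    mul_one, transpose_shiftMatrix_mul_shiftMatrix]
  ext i j
  simp only [Lmat, of_apply, Matrix.sub_apply, one_apply, transpose_apply, shiftMatrix,
    diagonal_apply, Fin.ext_iff]
  split_ifs <;> first | omega | norm_num

theorem four_sub_Lmat_eq [StarRing R] :
    4 - Lmat R N = (1 + shiftMatrix R N)ᴴ * (1 + shiftMatrix R N) +
      diagonal fun i : Fin N => if (i : ℕ) = 0 then 2 else 0 := by
  rw [conjTranspose_add, conjTranspose_one, shiftMatrix_conjTranspose, add_mul, one_mul, mul_add,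
    mul_one, transpose_shiftMatrix_mul_shiftMatrix]
  ext i j
  simp only [Lmat, of_apply, Matrix.sub_apply, Matrix.add_apply, one_apply, transpose_apply,
    shiftMatrix, diagonal_apply, ofNat_apply, Fin.ext_iff]
  split_ifs <;> first | omega | norm_num

end Shift

section PosDef

variable {𝕜 : Type*} [RCLike 𝕜] {N : ℕ}

theorem Matrix.PosDef.pos_of_mulVec_eq_smul {n : Type*} [Fintype n] {A : Matrix n n 𝕜}
    (hA : A.PosDef) {μ : 𝕜} {v : n → 𝕜} (hv : v ≠ 0) (h : A *ᵥ v = μ • v) :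
    0 < μ := by
  have hr : 0 < star v ⬝ᵥ v := dotProduct_star_self_pos_iff.mpr hv
  have hμr : 0 < μ * (star v ⬝ᵥ v) := by
    simpa [h, dotProduct_smul, mul_comm] using hA.dotProduct_mulVec_pos hv
  simpa [hr.ne'] using div_pos hμr hr

theorem posDef_conjTranspose_mul_self_one_add_smul_shiftMatrix (c : 𝕜) :
    ((1 + c • shiftMatrix 𝕜 N)ᴴ * (1 + c • shiftMatrix 𝕜 N)).PosDef :=
  .conjTranspose_mul_self _ <| mulVec_injective_iff_isUnit.mpr <|
    (isUnit_iff_isUnit_det _).mpr <| by simp [det_one_add_smul_shiftMatrix]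

theorem Lmat_posDef : (Lmat 𝕜 N).PosDef := by
  simpa [Lmat_eq_conjTranspose_mul_self, sub_eq_add_neg] using
    posDef_conjTranspose_mul_self_one_add_smul_shiftMatrix (N := N) (-1 : 𝕜)

theorem four_sub_Lmat_posDef : (4 - Lmat 𝕜 N).PosDef := by
  have h := posDef_conjTranspose_mul_self_one_add_smul_shiftMatrix (N := N) (1 : 𝕜)
  rw [one_smul] at h
  rw [four_sub_Lmat_eq]
  refine h.add_posSemidef (posSemidef_diagonal_iff.mpr fun i => ?_)
  split_ifs <;> norm_num

theorem Lmat_eigenvalue_mem_Ioo {μ : 𝕜} {v : Fin N → 𝕜} (hv : v ≠ 0)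
    (h : Lmat 𝕜 N *ᵥ v = μ • v) : ∃ k ∈ Set.Ioo (0 : ℝ) 4, μ = k := by
  obtain ⟨k, hk, rfl⟩ :=
    RCLike.pos_iff_exists_ofReal.mp (Lmat_posDef.pos_of_mulVec_eq_smul hv h)
  have h4 : (0 : 𝕜) < 4 - k := four_sub_Lmat_posDef.pos_of_mulVec_eq_smul hv <| by
    rw [sub_mulVec, h, sub_smul, ofNat_mulVec, ofNat_smul_eq_nsmul]
  refine ⟨k, ⟨hk, ?_⟩, rfl⟩
  exact_mod_cast sub_pos.mp h4

theorem exists_mem_Ioo_add_mul_eq_zero_of_det_eq_zero {a b : 𝕜} (hab : ¬(a = 0 ∧ b = 0))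
    (h : (a • 1 + b • Lmat 𝕜 N).det = 0) :
    b ≠ 0 ∧ ∃ k ∈ Set.Ioo (0 : ℝ) 4, a + k * b = 0 := by
  have hb : b ≠ 0 := by
    rintro rfl
    simp only [zero_smul, add_zero, det_smul, det_one, mul_one, Fintype.card_fin] at h
    exact hab ⟨eq_zero_of_pow_eq_zero h, rfl⟩
  set μ := -a / b
  have hμ : a • 1 + b • Lmat 𝕜 N = b • (Lmat 𝕜 N - μ • 1) := by
    rw [smul_sub, smul_smul, mul_div_cancel₀ _ hb, neg_smul, sub_neg_eq_add, add_comm]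
  rw [hμ, det_smul, mul_eq_zero, or_iff_right (pow_ne_zero _ hb)] at h
  obtain ⟨v, hv, hLv⟩ := exists_mulVec_eq_zero_iff.mpr h
  rw [sub_mulVec, smul_mulVec, one_mulVec, sub_eq_zero] at hLv
  obtain ⟨k, hk, hμk⟩ := Lmat_eigenvalue_mem_Ioo hv hLv
  refine ⟨hb, k, hk, ?_⟩
  rw [← hμk, div_mul_cancel₀ _ hb, add_neg_cancel]

end PosDef

section Pencil

variable {R S F : Type*} [CommRing R] [CommRing S] [FunLike F R S] [RingHomClass F R S] {N : ℕ}

theorem Lmat_map (f : F) : (Lmat R N).map f = Lmat S N := by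
  ext i j
  simp only [Lmat, map_apply, of_apply, apply_ite f, map_one, map_neg, map_zero, map_ofNat]

theorem map_det_smul_one_add_smul_Lmat (f : F) (a b : R) :
    f (a • 1 + b • Lmat R N).det = (f a • 1 + f b • Lmat S N).det := by
  rw [← RingHom.coe_coe f, RingHom.map_det, RingHom.mapMatrix_apply, ← Lmat_map f]
  congr 1
  ext i j
  simp [one_apply, apply_ite f]

theorem det_mul_C_smul_one_add_smul_Lmat (p : R[X]) (a : R) :
    ((p * C a) • 1 + p • Lmat R[X] N).det = p ^ N * C (a • 1 + Lmat R N).det := by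
  have h := map_det_smul_one_add_smul_Lmat (N := N) (C : R →+* R[X]) a 1
  rw [one_smul, map_one, one_smul] at h
  rw [h, ← smul_smul, ← smul_add, det_smul, Fintype.card_fin]

end Pencil

section RatFunc

variable {K S F : Type*} [Field K] [CommRing S] [FunLike F K[X] S] [RingHomClass F K[X] S]
  (f : F) {p q : K[X]}

theorem RatFunc.map_denom_div_eq_zero [NoZeroDivisors S] (hq : q ≠ 0) (hfq : f q = 0)
    (hfp : f p ≠ 0) :
    f (algebraMap K[X] (RatFunc K) p / algebraMap K[X] (RatFunc K) q).denom = 0 := by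
  have h := congrArg f ((RatFunc.num_mul_eq_mul_denom_iff (p := p) hq).mpr rfl)
  rw [map_mul, map_mul, hfq, mul_zero, eq_comm, mul_eq_zero] at h
  exact h.resolve_left hfp

theorem RatFunc.ne_zero_and_map_eq_zero_of_map_denom_div_eq_zero [Nontrivial S]
    (h : f (algebraMap K[X] (RatFunc K) p / algebraMap K[X] (RatFunc K) q).denom = 0) :
    q ≠ 0 ∧ f q = 0 := by
  refine ⟨?_, zero_dvd_iff.mp (h ▸ map_dvd f (RatFunc.denom_div_dvd p q))⟩
  rintro rfl
  rw [map_zero, div_zero, RatFunc.denom_zero, map_one] at h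
  exact one_ne_zero h

theorem one_div_one_add_C_mul_eq_div (G : RatFunc K) (k : K) :
    1 / (1 + RatFunc.C k * G) =
      algebraMap K[X] (RatFunc K) G.denom /
        algebraMap K[X] (RatFunc K) (G.denom + C k * G.num) := by
  rw [one_div, ← inv_div, map_add, map_mul, RatFunc.algebraMap_C, add_div,
    div_self (RatFunc.algebraMap_ne_zero G.denom_ne_zero), mul_div_assoc, RatFunc.num_div_denom]

theorem one_div_det_one_add_smul_Lmat_eq_div (G : RatFunc K) (N : ℕ) :
    1 / (1 + G • Lmat (RatFunc K) N).det =
      algebraMap K[X] (RatFunc K) (G.denom ^ N) /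
        algebraMap K[X] (RatFunc K) (G.denom • 1 + G.num • Lmat K[X] N).det := by
  have hq := RatFunc.algebraMap_ne_zero G.denom_ne_zero
  have hp : algebraMap K[X] (RatFunc K) G.num = algebraMap K[X] (RatFunc K) G.denom * G := by
    rw [mul_comm, ← div_eq_iff hq, RatFunc.num_div_denom]
  rw [map_det_smul_one_add_smul_Lmat, hp, ← smul_smul _ G, ← smul_add, det_smul,
    Fintype.card_fin, map_pow, one_div, div_mul_cancel_left₀ (pow_ne_zero _ hq)]

end RatFunc

theorem exists_mem_Ioo_aeval_add_C_mul_eq_zero {p q : ℝ[X]} (hpq : IsCoprime p q) {N : ℕ}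
    {z : ℂ} (hD : (q • 1 + p • Lmat ℝ[X] N).det ≠ 0)
    (hDz : aeval z (q • 1 + p • Lmat ℝ[X] N).det = 0) :
    ∃ k ∈ Set.Ioo (0 : ℝ) 4,
      q + C k * p ≠ 0 ∧ aeval z (q + C k * p) = 0 ∧ aeval z q ≠ 0 := by
  have hpq' : ¬(aeval z q = 0 ∧ aeval z p = 0) := fun ⟨hq, hp⟩ =>
    not_isCoprime_zero_zero (hq ▸ hp ▸ hpq.symm.map (aeval z).toRingHom)
  obtain ⟨hpz, k, hk, hqp⟩ := exists_mem_Ioo_add_mul_eq_zero_of_det_eq_zero hpq'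
    (by rwa [map_det_smul_one_add_smul_Lmat] at hDz)
  refine ⟨k, hk, fun hg => hD ?_, by simpa using hqp, ?_⟩
  · -- `q = -k p` makes the determinant `p ^ N` times a real constant, which vanishes at `z`
    have hq : q = p * C (-k) := by
      rw [C_neg, mul_neg, mul_comm]
      exact eq_neg_of_add_eq_zero_left hg
    rw [hq, det_mul_C_smul_one_add_smul_Lmat] at hDz ⊢
    rw [map_mul, map_pow, aeval_C, mul_eq_zero, or_iff_right (pow_ne_zero _ hpz),
      Complex.coe_algebraMap, Complex.ofReal_eq_zero] at hDz
    rw [hDz, C_0, mul_zero]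
  · rw [eq_neg_of_add_eq_zero_left hqp, neg_ne_zero]
    exact mul_ne_zero (Complex.ofReal_ne_zero.mpr hk.1.ne') hpz

/-- If `1/(1 + k P C)` is stable for every `k ∈ (0,4)`, then `1/det(I + P C L_N)` has no
poles in the closed right half-plane, for every `N`. -/
theorem det_inv_no_CRHP_poles (P C : RatFunc ℝ)
    (hstab : ∀ k : ℝ, k ∈ Set.Ioo (0 : ℝ) 4 → IsStable (1 / (1 + RatFunc.C k * P * C))) :
    ∀ N : ℕ, ∀ z : ℂ, 0 ≤ z.re →
      ((1 / Matrix.det (1 + (P * C) • Lmat (RatFunc ℝ) N)).denom.map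
          (algebraMap ℝ ℂ)).eval z ≠ 0 := by
  intro N z hz hpole
  rw [one_div_det_one_add_smul_Lmat_eq_div, eval_map_algebraMap] at hpole
  obtain ⟨hD, hDz⟩ := RatFunc.ne_zero_and_map_eq_zero_of_map_denom_div_eq_zero (aeval z) hpole
  obtain ⟨k, hk, hg, hgz, hqz⟩ :=
    exists_mem_Ioo_aeval_add_C_mul_eq_zero (RatFunc.isCoprime_num_denom _) hD hDz
  refine (hstab k hk).2 z hz ?_
  rw [mul_assoc, one_div_one_add_C_mul_eq_div, eval_map_algebraMap]
  exact RatFunc.map_denom_div_eq_zero (aeval z) hg hgz hqz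
end

section
/- Let ζ_N = 1 − iΔ_N/√a + ((b√a − 1)/(2a))Δ_N² + O(Δ_N³) where Δ_N = π√a/(2N+1), a ≠ 0, b ∈ ℂ. Then as N → ∞: (i) 1 − ζ_N = iπ/(2N+1) + O(1/N²); (ii) 1 − ζ_N^{2N} → 2; (iii) (2N+1)(1 + ζ_N^{2N+1}) → −π²·(b√a)/2 (assuming b ≠ 0); and consequently (1 − ζ_N)(1 − ζ_N^{2N})/(1 + ζ_N^{2N+1}) → −4i/(π·b·√a). -/
/-!
Put `t = 1/(2N+1)`. Since `r² = a`, the hypothesis reads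
`ζ = 1 - iπ t + (π²(br - 1)/2) t² + O(t³)`, which is (i), and the second-order Taylor
expansion of `log (1 + u)` turns it into `log ζ = -iπ t + c t² + O(t³)` with `c = π² b r / 2`.
Hence `w = (2N+1) log ζ + iπ` satisfies `(2N+1) w → c`, and `ζ^(2N+1) = e^(-iπ) e^w = -e^w`, so
`(2N+1)(1 + ζ^(2N+1)) = -(e^w - 1)/t → -c`. In particular `ζ^(2N+1) → -1`, which gives (ii)
because `ζ → 1`, and (iv) is the quotient of `(2N+1)(1 - ζ) → iπ`, of (ii) and of (iii).
-/

open Matrix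

open Filter Asymptotics Topology
open Real

section

variable {α 𝕜 : Type*} [NormedField 𝕜] {l : Filter α} {t z : α → 𝕜} {p q : 𝕜}

theorem isBigO_pow_of_tendsto_zero (ht : Tendsto t l (𝓝 0)) {m n : ℕ} (hmn : m ≤ n) :
    (fun x => t x ^ n) =O[l] fun x => t x ^ m := by
  rcases hmn.eq_or_lt with rfl | hlt
  · exact isBigO_refl _ _
  · exact ((isLittleO_pow_pow hlt).comp_tendsto ht).isBigO

theorem isBigO_sub_one_sub_mul (ht : Tendsto t l (𝓝 0))
    (hz : (fun x => z x - (1 + p * t x + q * t x ^ 2)) =O[l] fun x => t x ^ 3) :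
    (fun x => z x - 1 - p * t x) =O[l] fun x => t x ^ 2 :=
  ((isBigO_const_mul_self q _ l).add
    (hz.trans (isBigO_pow_of_tendsto_zero ht (by norm_num)))).congr_left fun x => by ring

theorem isBigO_sub_one (ht : Tendsto t l (𝓝 0))
    (hz : (fun x => z x - (1 + p * t x + q * t x ^ 2)) =O[l] fun x => t x ^ 3) :
    (fun x => z x - 1) =O[l] t := by
  have hsq : (fun x => t x ^ 2) =O[l] t := by
    simpa using isBigO_pow_of_tendsto_zero ht (m := 1) (by norm_num)
  exact ((isBigO_const_mul_self p t l).add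
    ((isBigO_sub_one_sub_mul ht hz).trans hsq)).congr_left fun x => by ring

theorem tendsto_div_pow_of_isBigO_sub {f : α → 𝕜} {A : 𝕜} {n : ℕ} (ht : Tendsto t l (𝓝 0))
    (ht₀ : ∀ x, t x ≠ 0) (hf : (fun x => f x - A * t x ^ n) =O[l] fun x => t x ^ (n + 1)) :
    Tendsto (fun x => f x / t x ^ n) l (𝓝 A) := by
  have hrem : (fun x => (f x - A * t x ^ n) / t x ^ n) =O[l] t :=
    (hf.mul (isBigO_refl (fun x => (t x ^ n)⁻¹) l)).congr (fun x => (div_eq_mul_inv _ _).symm)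
      fun x => by rw [pow_succ', mul_inv_cancel_right₀ (pow_ne_zero n (ht₀ x))]
  refine (zero_add A ▸ (hrem.trans_tendsto ht).add_const A).congr fun x => ?_
  rw [sub_div, mul_div_cancel_right₀ _ (pow_ne_zero n (ht₀ x)), sub_add_cancel]

theorem Filter.Tendsto.mul_div_of_rescaled {s f g h : α → 𝕜} {A B C : 𝕜} (hs : ∀ x, s x ≠ 0)
    (hf : Tendsto (fun x => s x * f x) l (𝓝 A)) (hg : Tendsto g l (𝓝 B))
    (hh : Tendsto (fun x => s x * h x) l (𝓝 C)) (hC : C ≠ 0) :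
    Tendsto (fun x => f x * g x / h x) l (𝓝 (A * B / C)) :=
  ((hf.mul hg).div hh hC).congr fun x => by
    show s x * f x * g x / (s x * h x) = _
    rw [mul_assoc, mul_div_mul_left _ _ (hs x)]

end

namespace Complex

variable {α : Type*} {l : Filter α} {t u w z : α → ℂ}

theorem isBigO_log_one_add_sub (hu : Tendsto u l (𝓝 0)) :
    (fun x => log (1 + u x) - (u x - u x ^ 2 / 2)) =O[l] fun x => u x ^ 3 := by
  have hTaylor (v : ℂ) : logTaylor 3 v = v - v ^ 2 / 2 := by
    simp [logTaylor_succ, logTaylor_zero]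
    ring
  simpa only [hTaylor, Function.comp_def] using (log_sub_logTaylor_isBigO 2).comp_tendsto hu

theorem isBigO_log_sub_quadratic {p q : ℂ} (ht : Tendsto t l (𝓝 0))
    (hz : (fun x => z x - (1 + p * t x + q * t x ^ 2)) =O[l] fun x => t x ^ 3) :
    (fun x => log (z x) - (p * t x + (q - p ^ 2 / 2) * t x ^ 2)) =O[l] fun x => t x ^ 3 := by
  have hlin := isBigO_sub_one ht hz
  have hsq : (fun x => (z x - 1) ^ 2 - p ^ 2 * t x ^ 2) =O[l] fun x => t x ^ 3 :=
    ((isBigO_sub_one_sub_mul ht hz).mul (hlin.add (isBigO_const_mul_self p t l))).congr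
      (fun x => by ring) fun x => by ring
  have hlog := (isBigO_log_one_add_sub (hlin.trans_tendsto ht)).trans (hlin.pow 3)
  refine ((hlog.add hz).sub (hsq.const_mul_left (1 / 2))).congr_left fun x => ?_
  simp only [add_sub_cancel]
  ring

theorem tendsto_exp_sub_one_div {c : ℂ} (hw : Tendsto w l (𝓝 0))
    (hwt : Tendsto (fun x => w x / t x) l (𝓝 c)) :
    Tendsto (fun x => (exp (w x) - 1) / t x) l (𝓝 c) := by
  have hslope : Tendsto (fun x => dslope exp 0 (w x)) l (𝓝 1) := by
    simpa [dslope_same, Function.comp_def] using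
      (continuousAt_dslope_same.2 differentiableAt_exp).tendsto.comp hw
  -- `(exp w - 1) / t = dslope exp 0 w * (w / t)` holds also where `w = 0`.
  refine (one_mul c ▸ hslope.mul hwt).congr fun x => ?_
  rcases eq_or_ne (w x) 0 with h | h
  · simp [h]
  · rw [dslope_of_ne _ h, slope_def_field, sub_zero, exp_zero]
    field_simp

end Complex

open Complex

theorem two_mul_natCast_add_one_ne_zero (N : ℕ) : 2 * (N : ℂ) + 1 ≠ 0 := by
  exact_mod_cast (2 * N).succ_ne_zero

theorem isTheta_inv_two_mul_add_one :
    (fun N : ℕ => (2 * (N : ℂ) + 1)⁻¹) =Θ[atTop] fun N : ℕ => ((N : ℝ))⁻¹ := by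
  have hnorm (N : ℕ) : ‖2 * (N : ℂ) + 1‖ = 2 * N + 1 := by
    exact_mod_cast Complex.norm_natCast (2 * N + 1)
  refine IsTheta.inv ⟨IsBigO.of_bound 3 ?_, IsBigO.of_bound 1 ?_⟩ <;>
    filter_upwards [eventually_ge_atTop 1] with N hN <;>
    rw [hnorm, Real.norm_of_nonneg (Nat.cast_nonneg N)] <;>
    linarith [(Nat.one_le_cast (α := ℝ)).2 hN]

theorem isTheta_inv_two_mul_add_one_pow (n : ℕ) :
    (fun N : ℕ => (2 * (N : ℂ) + 1)⁻¹ ^ n) =Θ[atTop] fun N : ℕ => ((N : ℝ) ^ n)⁻¹ := by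
  simpa only [inv_pow] using isTheta_inv_two_mul_add_one.pow n

theorem tendsto_inv_two_mul_add_one :
    Tendsto (fun N : ℕ => (2 * (N : ℂ) + 1)⁻¹) atTop (𝓝 0) :=
  isTheta_inv_two_mul_add_one.isBigO.trans_tendsto
    (tendsto_inv_atTop_zero.comp tendsto_natCast_atTop_atTop)

theorem isBigO_sub_quadratic_inv_two_mul_add_one {a b r : ℂ} {ζ : ℕ → ℂ} (hr₀ : r ≠ 0)
    (hr : r ^ 2 = a)
    (hζ : (fun N : ℕ => ζ N - (1 - I * ((π : ℂ) * r / (2 * N + 1)) / r +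
        ((b * r - 1) / (2 * a)) * ((π : ℂ) * r / (2 * N + 1)) ^ 2))
      =O[atTop] fun N : ℕ => ((N : ℝ) ^ 3)⁻¹) :
    (fun N : ℕ => ζ N - (1 + -((π : ℂ) * I) * (2 * (N : ℂ) + 1)⁻¹ +
        π ^ 2 * (b * r - 1) / 2 * (2 * (N : ℂ) + 1)⁻¹ ^ 2))
      =O[atTop] fun N : ℕ => (2 * (N : ℂ) + 1)⁻¹ ^ 3 := by
  subst hr
  refine (hζ.trans (isTheta_inv_two_mul_add_one_pow 3).symm.isBigO).congr_left fun N => ?_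
  have := two_mul_natCast_add_one_ne_zero N
  field_simp
  ring

theorem tendsto_two_mul_add_one_mul_one_add_pow {ζ : ℕ → ℂ} {c : ℂ}
    (hζ : ∀ᶠ N in atTop, ζ N ≠ 0)
    (hlog : (fun N : ℕ => log (ζ N) -
        (-((π : ℂ) * I) * (2 * (N : ℂ) + 1)⁻¹ + c * (2 * (N : ℂ) + 1)⁻¹ ^ 2))
      =O[atTop] fun N : ℕ => (2 * (N : ℂ) + 1)⁻¹ ^ 3) :
    Tendsto (fun N : ℕ => (2 * (N : ℂ) + 1) * (1 + ζ N ^ (2 * N + 1))) atTop (𝓝 (-c)) := by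
  set w : ℕ → ℂ := fun N => (2 * (N : ℂ) + 1) * log (ζ N) + (π : ℂ) * I
  have hwt : Tendsto (fun N => w N / (2 * (N : ℂ) + 1)⁻¹) atTop (𝓝 c) := by
    refine (tendsto_div_pow_of_isBigO_sub (n := 2) (A := c)
      (f := fun N => log (ζ N) + π * I * (2 * (N : ℂ) + 1)⁻¹) tendsto_inv_two_mul_add_one
      (fun N => inv_ne_zero (two_mul_natCast_add_one_ne_zero N))
      (hlog.congr_left fun N => by ring)).congr fun N => ?_
    have := two_mul_natCast_add_one_ne_zero N
    field_simp
    ring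
  have hw : Tendsto w atTop (𝓝 0) := by
    refine (zero_mul c ▸ tendsto_inv_two_mul_add_one.mul hwt).congr fun N => ?_
    have := two_mul_natCast_add_one_ne_zero N
    field_simp
  have hpow : ∀ᶠ N in atTop, ζ N ^ (2 * N + 1) = -exp (w N) := by
    filter_upwards [hζ] with N hN
    rw [← exp_log hN, ← Complex.exp_nat_mul]
    have : ((2 * N + 1 : ℕ) : ℂ) * log (ζ N) = w N - (π : ℂ) * I := by push_cast; ring
    rw [this, Complex.exp_sub, exp_pi_mul_I]
    field_simp
  refine (tendsto_exp_sub_one_div hw hwt).neg.congr' ?_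
  filter_upwards [hpow] with N hN
  rw [hN, div_inv_eq_mul]
  ring

theorem tendsto_one_sub_pow_two_mul {ζ : ℕ → ℂ} {L : ℂ} (hζ : Tendsto ζ atTop (𝓝 1))
    (h : Tendsto (fun N : ℕ => (2 * (N : ℂ) + 1) * (1 + ζ N ^ (2 * N + 1))) atTop (𝓝 L)) :
    Tendsto (fun N : ℕ => 1 - ζ N ^ (2 * N)) atTop (𝓝 2) := by
  have hpow : Tendsto (fun N : ℕ => ζ N ^ (2 * N + 1)) atTop (𝓝 (-1)) := by
    have hlim := (tendsto_inv_two_mul_add_one.mul h).const_add (-1)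
    rw [zero_mul, add_zero] at hlim
    refine hlim.congr fun N => ?_
    field_simp [two_mul_natCast_add_one_ne_zero N]
    ring
  have hlim := (hpow.div hζ one_ne_zero).const_sub 1
  rw [show (1 : ℂ) - -1 / 1 = 2 by norm_num] at hlim
  refine hlim.congr' ?_
  filter_upwards [hζ.eventually_ne one_ne_zero] with N hN
  rw [Pi.div_apply, pow_succ, mul_div_cancel_right₀ _ hN]

/-- Asymptotics of `ζ_N = 1 − iΔ_N/√a + ((b√a−1)/(2a))Δ_N² + O(Δ_N³)` with
`Δ_N = π√a/(2N+1)`. -/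
theorem zeta_sequence_limits (a b r : ℂ) (ha : a ≠ 0) (hb : b ≠ 0) (hr : r ^ 2 = a)
    (ζ : ℕ → ℂ)
    (hζ : (fun N : ℕ => ζ N -
            (1 - Complex.I * ((Real.pi : ℂ) * r / (2 * N + 1)) / r +
              ((b * r - 1) / (2 * a)) * ((Real.pi : ℂ) * r / (2 * N + 1)) ^ 2))
          =O[atTop] fun N : ℕ => ((N : ℝ) ^ 3)⁻¹) :
    ((fun N : ℕ => (1 - ζ N) - Complex.I * (Real.pi : ℂ) / (2 * N + 1))
        =O[atTop] fun N : ℕ => ((N : ℝ) ^ 2)⁻¹) ∧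
    Tendsto (fun N : ℕ => 1 - ζ N ^ (2 * N)) atTop (𝓝 2) ∧
    Tendsto (fun N : ℕ => (2 * (N : ℂ) + 1) * (1 + ζ N ^ (2 * N + 1))) atTop
      (𝓝 (-(Real.pi : ℂ) ^ 2 * (b * r) / 2)) ∧
    Tendsto (fun N : ℕ => (1 - ζ N) * (1 - ζ N ^ (2 * N)) / (1 + ζ N ^ (2 * N + 1))) atTop
      (𝓝 (-4 * Complex.I / ((Real.pi : ℂ) * b * r))) := by
  have hr₀ : r ≠ 0 := by rintro rfl; simp [← hr] at ha
  have ht := tendsto_inv_two_mul_add_one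
  have hζexp := isBigO_sub_quadratic_inv_two_mul_add_one hr₀ hr hζ
  have hlin := isBigO_sub_one_sub_mul ht hζexp
  have hζ1 : Tendsto ζ atTop (𝓝 1) :=
    tendsto_sub_nhds_zero_iff.1 ((isBigO_sub_one ht hζexp).trans_tendsto ht)
  have hiii : Tendsto (fun N : ℕ => (2 * (N : ℂ) + 1) * (1 + ζ N ^ (2 * N + 1))) atTop
      (𝓝 (-(π : ℂ) ^ 2 * (b * r) / 2)) := by
    convert tendsto_two_mul_add_one_mul_one_add_pow (c := π ^ 2 * (b * r) / 2)
      (hζ1.eventually_ne one_ne_zero)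
      ((isBigO_log_sub_quadratic ht hζexp).congr_left fun N => by
        linear_combination (π : ℂ) ^ 2 * (2 * (N : ℂ) + 1)⁻¹ ^ 2 / 2 * I_sq) using 2
    ring
  have hnum : Tendsto (fun N : ℕ => (2 * (N : ℂ) + 1) * (1 - ζ N)) atTop (𝓝 (π * I)) := by
    refine (tendsto_div_pow_of_isBigO_sub (n := 1) (f := fun N => 1 - ζ N) ht
      (fun N => inv_ne_zero (two_mul_natCast_add_one_ne_zero N))
      (hlin.neg_left.congr_left fun N => by ring)).congr fun N => ?_
    rw [pow_one, div_inv_eq_mul, mul_comm]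
  refine ⟨?_, tendsto_one_sub_pow_two_mul hζ1 hiii, hiii, ?_⟩
  · exact (hlin.neg_left.trans (isTheta_inv_two_mul_add_one_pow 2).isBigO).congr_left
      fun N => by ring
  · convert hnum.mul_div_of_rescaled two_mul_natCast_add_one_ne_zero
      (tendsto_one_sub_pow_two_mul hζ1 hiii) hiii (by simp [hb, hr₀, pi_ne_zero]) using 2
    field_simp
    ring
end
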